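/- arXiv:1310.1077 — 7 statements merged into one kernel-verified Lean document; each statement's English description precedes it below -/
import Mathlib

section
/- Let R be a ring and S, T left Ore sets in R (multiplicative subsets satisfying the left Ore condition). If the multiplicative submonoid ST of (R,·) generated by S and T does not contain 0, then ST is a left Ore set in R. -/
/-- A left Ore set in a ring `R`: a multiplicative subset (`1 ∈ S`, `0 ∉ S`,
closed under multiplication) satisfying the left Ore condition. -/
def IsLeftOreSet (R : Type*) [Ring R] (S : Set R) : Prop :=
  (1 : R) ∈ S ∧ (0 : R) ∉ S ∧ (∀ s ∈ S, ∀ t ∈ S, s * t ∈ S) ∧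
    ∀ (r : R), ∀ s ∈ S, ∃ s' ∈ S, ∃ r' : R, s' * r = r' * s

/-- A left denominator set: a left Ore set such that `r * s = 0` implies
`t * r = 0` for some `t ∈ S`. -/
def IsLeftDenSet (R : Type*) [Ring R] (S : Set R) : Prop :=
  IsLeftOreSet R S ∧ ∀ (r : R), ∀ s ∈ S, r * s = 0 → ∃ t ∈ S, t * r = 0

/-- `ass(S) = {r ∈ R | s r = 0 for some s ∈ S}`. -/
def assSet (R : Type*) [Ring R] (S : Set R) : Set R :=
  {r : R | ∃ s ∈ S, s * r = 0}

/-- A maximal left denominator set of `R`. -/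
def IsMaxLeftDenSet (R : Type*) [Ring R] (S : Set R) : Prop :=
  IsLeftDenSet R S ∧ ∀ T : Set R, IsLeftDenSet R T → S ⊆ T → T = S

/-- The set `L^s_l(R)` of strongly left localizable elements: the intersection of
all maximal left denominator sets of `R`. -/
def stronglyLocalizable (R : Type*) [Ring R] : Set R :=
  {r : R | ∀ S : Set R, IsMaxLeftDenSet R S → r ∈ S}

/-- `T_l(R)`: the union of all left denominator sets contained in `L^s_l(R)`
(the largest strong left denominator set). -/
def Tl (R : Type*) [Ring R] : Set R :=
  ⋃₀ {S : Set R | IsLeftDenSet R S ∧ S ⊆ stronglyLocalizable R}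

/-- The left localization radical `l_R = ⋂_{S ∈ max.Den_l(R)} ass(S)`. -/
def lRad (R : Type*) [Ring R] : Set R :=
  {r : R | ∀ S : Set R, IsMaxLeftDenSet R S → r ∈ assSet R S}

/-- `f : R →+* Q` is a left Ore localization of `R` at `S`: elements of `S` become
units, every element of `Q` is of the form `s⁻¹ r`, and `ker f = ass(S)`. -/
def IsLeftLocalization (R : Type*) [Ring R] {Q : Type*} [Ring Q]
    (S : Set R) (f : R →+* Q) : Prop :=
  (∀ s ∈ S, IsUnit (f s)) ∧
  (∀ q : Q, ∃ s ∈ S, ∃ r : R, ∃ u : Qˣ, (u : Q) = f s ∧ q = (↑u⁻¹ : Q) * f r) ∧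
  (∀ r : R, f r = 0 ↔ r ∈ assSet R S)

theorem stmt0 (R : Type*) [Ring R] (S T : Set R)
    (hS : IsLeftOreSet R S) (hT : IsLeftOreSet R T)
    (h0 : (0 : R) ∉ (Submonoid.closure (S ∪ T) : Set R)) :
    IsLeftOreSet R (Submonoid.closure (S ∪ T) : Set R) := by
  refine ⟨Submonoid.one_mem _, h0, fun a ha b hb => Submonoid.mul_mem _ ha hb, fun r u hu => ?_⟩
  induction hu using Submonoid.closure_induction generalizing r with
  | mem x hx =>
    rcases hx with hx | hx
    · obtain ⟨s', hs', r', h⟩ := hS.2.2.2 r x hx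
      exact ⟨s', Submonoid.subset_closure (Or.inl hs'), r', h⟩
    · obtain ⟨s', hs', r', h⟩ := hT.2.2.2 r x hx
      exact ⟨s', Submonoid.subset_closure (Or.inr hs'), r', h⟩
  | one => exact ⟨1, Submonoid.one_mem _, r, by simp⟩
  | mul a b _ _ ha hb =>
    obtain ⟨b', hb', r₁, h₁⟩ := hb r
    obtain ⟨a', ha', r₂, h₂⟩ := ha r₁
    exact ⟨a' * b', Submonoid.mul_mem _ ha' hb', r₂, by
      rw [mul_assoc, h₁, ← mul_assoc, h₂, mul_assoc]⟩
end

section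
/- Let R be a ring and S a left denominator set in R. If S is maximal in the poset of left denominator sets of R, then for every left denominator set T of R with T ⊄ S, the submonoid ST generated by S and T contains 0. Conversely, if 0 ∈ ST for every left denominator set T not contained in S, then S is a maximal left denominator set. -/
lemma unionDen (R : Type*) [Ring R] {S T : Set R} (hS : IsLeftDenSet R S)
    (hT : IsLeftDenSet R T) (h0 : (0:R) ∉ (Submonoid.closure (S ∪ T) : Set R)) :
    IsLeftDenSet R (Submonoid.closure (S ∪ T) : Set R) := by
  obtain ⟨⟨hS1, hS0, hSm, hSo⟩, hSd⟩ := hS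
  obtain ⟨⟨hT1, hT0, hTm, hTo⟩, hTd⟩ := hT
  set U : Submonoid R := Submonoid.closure (S ∪ T) with hU
  refine ⟨⟨U.one_mem, h0, fun s hs t ht => U.mul_mem hs ht, ?_⟩, ?_⟩
  · intro r u hu
    induction hu using Submonoid.closure_induction generalizing r with
    | mem a ha =>
      rcases ha with ha | ha
      · obtain ⟨s', hs', r', hr'⟩ := hSo r a ha
        exact ⟨s', Submonoid.subset_closure (Or.inl hs'), r', hr'⟩
      · obtain ⟨s', hs', r', hr'⟩ := hTo r a ha
        exact ⟨s', Submonoid.subset_closure (Or.inr hs'), r', hr'⟩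
    | one => exact ⟨1, U.one_mem, r, by rw [one_mul, mul_one]⟩
    | mul x y hx hy ihx ihy =>
      obtain ⟨v', hv', r1, hr1⟩ := ihy r
      obtain ⟨w, hw, r2, hr2⟩ := ihx r1
      exact ⟨w * v', U.mul_mem hw hv', r2, by
        rw [mul_assoc, hr1, ← mul_assoc, hr2, mul_assoc]⟩
  · intro r u hu hru
    induction hu using Submonoid.closure_induction generalizing r with
    | mem a ha =>
      rcases ha with ha | ha
      · obtain ⟨t, ht, htr⟩ := hSd r a ha hru
        exact ⟨t, Submonoid.subset_closure (Or.inl ht), htr⟩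
      · obtain ⟨t, ht, htr⟩ := hTd r a ha hru
        exact ⟨t, Submonoid.subset_closure (Or.inr ht), htr⟩
    | one => exact ⟨1, U.one_mem, by rw [one_mul, ← mul_one r, hru]⟩
    | mul x y hx hy ihx ihy =>
      have : (r * x) * y = 0 := by rw [mul_assoc, hru]
      obtain ⟨w1, hw1, hw1r⟩ := ihy (r * x) this
      have : (w1 * r) * x = 0 := by rw [mul_assoc, hw1r]
      obtain ⟨w2, hw2, hw2r⟩ := ihx (w1 * r) this
      exact ⟨w2 * w1, U.mul_mem hw2 hw1, by rw [mul_assoc, hw2r]⟩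

theorem stmt3 (R : Type*) [Ring R] (S : Set R) (hS : IsLeftDenSet R S) :
    IsMaxLeftDenSet R S ↔
      ∀ T : Set R, IsLeftDenSet R T → ¬ T ⊆ S →
        (0 : R) ∈ (Submonoid.closure (S ∪ T) : Set R) := by
  constructor
  · intro hmax T hT hTS
    by_contra h0
    have hU := unionDen R hS hT h0
    have hSU : S ⊆ (Submonoid.closure (S ∪ T) : Set R) :=
      fun x hx => Submonoid.subset_closure (Or.inl hx)
    have := hmax.2 _ hU hSU
    exact hTS (fun x hx => this ▸ Submonoid.subset_closure (Or.inr hx))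
  · intro h
    refine ⟨hS, fun T hT hST => ?_⟩
    by_contra hne
    have hTS : ¬ T ⊆ S := fun hsub => hne (Set.Subset.antisymm hsub hST)
    have h0 := h T hT hTS
    have : (Submonoid.closure (S ∪ T) : Set R) ⊆ T := by
      rw [Set.union_eq_self_of_subset_left hST]
      intro x hx
      induction hx using Submonoid.closure_induction with
      | mem a ha => exact ha
      | one => exact hT.1.1
      | mul x y _ _ hx hy => exact hT.1.2.2.1 x hx y hy
    exact hT.1.2.1 (this h0)
end

section
/- Let R be a ring, S ∈ Den_l(R, a) a left denominator set with ass(S) = a, π : R → R/a the canonical projection, and T ∈ Den_l(R/a, b/a) a left denominator set of R/a with ass(T) = b/a, where b is an ideal of R containing a. If S ⊆ π⁻¹(T), then T' := π⁻¹(T) is a left denominator set of R with ass(T') = b. -/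
theorem stmt7 (R : Type*) [Ring R] (a b : TwoSidedIdeal R) (hab : a ≤ b)
    (S : Set R) (hS : IsLeftDenSet R S) (haS : assSet R S = (a : Set R))
    (T : Set a.ringCon.Quotient)
    (hT : IsLeftDenSet a.ringCon.Quotient T)
    (hbT : assSet a.ringCon.Quotient T = a.ringCon.mk' '' (b : Set R))
    (hsub : S ⊆ a.ringCon.mk' ⁻¹' T) :
    IsLeftDenSet R (a.ringCon.mk' ⁻¹' T) ∧
      assSet R (a.ringCon.mk' ⁻¹' T) = (b : Set R) := by
  set π := a.ringCon.mk' with hπ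
  have hsurj : Function.Surjective π := fun q =>
    Quotient.inductionOn' q fun r => ⟨r, rfl⟩
  have hker : ∀ r : R, π r = 0 ↔ r ∈ a := by
    intro r
    have : π r = π 0 ↔ a.ringCon r 0 := RingCon.eq _
    rw [map_zero] at this
    rw [this, a.rel_iff, sub_zero]
  -- membership in a gives annihilator in S
  have hann : ∀ r : R, r ∈ (a : Set R) → ∃ s ∈ S, s * r = 0 := by
    intro r hr; rw [← haS] at hr; exact hr
  obtain ⟨⟨hT1, hT0, hTmul, hTore⟩, hTden⟩ := hT
  -- key: lift annihilation
  have key : ∀ r : R, π r ∈ assSet a.ringCon.Quotient T →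
      ∃ s ∈ π ⁻¹' T, s * r = 0 := by
    intro r ⟨t, htT, htr⟩
    obtain ⟨t₀, rfl⟩ := hsurj t
    have : π (t₀ * r) = 0 := by rw [map_mul]; exact htr
    obtain ⟨u, huS, hu⟩ := hann _ ((hker _).1 this)
    refine ⟨u * t₀, ?_, by rw [mul_assoc, hu]⟩
    show π (u * t₀) ∈ T
    rw [map_mul]
    exact hTmul _ (hsub huS) _ htT
  constructor
  · refine ⟨⟨?_, ?_, ?_, ?_⟩, ?_⟩
    · show π 1 ∈ T; rw [map_one]; exact hT1
    · show π 0 ∉ T; rw [map_zero]; exact hT0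
    · intro s hs t ht
      show π (s * t) ∈ T; rw [map_mul]; exact hTmul _ hs _ ht
    · intro r s hsT
      obtain ⟨s', hs'T, r', hore⟩ := hTore (π r) (π s) hsT
      obtain ⟨s₀, rfl⟩ := hsurj s'
      obtain ⟨r₀, rfl⟩ := hsurj r'
      have h0 : π (s₀ * r - r₀ * s) = 0 := by
        rw [map_sub, map_mul, map_mul, hore, sub_self]
      obtain ⟨u, huS, hu⟩ := hann _ ((hker _).1 h0)
      refine ⟨u * s₀, ?_, u * r₀, ?_⟩
      · show π (u * s₀) ∈ T
        rw [map_mul]; exact hTmul _ (hsub huS) _ hs'T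
      · have h1 : u * (s₀ * r) - u * (r₀ * s) = 0 := by rw [← mul_sub]; exact hu
        rw [mul_assoc, mul_assoc]
        exact sub_eq_zero.mp h1
    · intro r s hsT hrs
      have : π r * π s = 0 := by rw [← map_mul, hrs, map_zero]
      obtain ⟨t, htT, ht⟩ := hTden (π r) (π s) hsT this
      exact key r ⟨t, htT, ht⟩
  · ext r
    constructor
    · rintro ⟨s, hsT, hsr⟩
      have : π r ∈ assSet a.ringCon.Quotient T :=
        ⟨π s, hsT, by rw [← map_mul, hsr, map_zero]⟩
      rw [hbT] at this
      obtain ⟨b₀, hb₀, hb₀r⟩ := this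
      have : π (r - b₀) = 0 := by rw [map_sub, hb₀r, sub_self]
      have hmem : r - b₀ ∈ b := hab ((hker _).1 this)
      have := b.add_mem hmem hb₀
      rwa [sub_add_cancel] at this
    · intro hr
      have : π r ∈ assSet a.ringCon.Quotient T := by
        rw [hbT]; exact ⟨r, hr, rfl⟩
      exact key r this
end

section
/- Let R be a ring and S a left denominator set of R with ass(S) = a. Then S + a is a left denominator set of R with ass(S + a) = a. In particular, every maximal left denominator set S of R satisfies S + ass(S) = S. -/
section Aux
variable {R : Type*} [Ring R] {S : Set R}

lemma ass_mul_left (hS : IsLeftDenSet R S) (r : R) {x : R}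
    (hx : x ∈ assSet R S) : r * x ∈ assSet R S := by
  obtain ⟨s, hs, hsx⟩ := hx
  obtain ⟨s', hs', r', hore⟩ := hS.1.2.2.2 r s hs
  exact ⟨s', hs', by rw [← mul_assoc, hore, mul_assoc, hsx, mul_zero]⟩

lemma ass_mul_right (r : R) {x : R}
    (hx : x ∈ assSet R S) : x * r ∈ assSet R S := by
  obtain ⟨s, hs, hsx⟩ := hx
  exact ⟨s, hs, by rw [← mul_assoc, hsx, zero_mul]⟩

lemma ass_add (hS : IsLeftDenSet R S) {x y : R}
    (hx : x ∈ assSet R S) (hy : y ∈ assSet R S) : x + y ∈ assSet R S := by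
  obtain ⟨s, hs, hsx⟩ := hx
  obtain ⟨t, ht, hty⟩ := hy
  obtain ⟨s', hs', r', hore⟩ := hS.1.2.2.2 s t ht
  refine ⟨s' * s, hS.1.2.2.1 s' hs' s hs, ?_⟩
  rw [mul_add, mul_assoc, hsx, mul_zero, hore, mul_assoc, hty, mul_zero, add_zero]

lemma den_plus (hS : IsLeftDenSet R S) :
    IsLeftDenSet R {x : R | ∃ s ∈ S, ∃ y ∈ assSet R S, x = s + y} ∧
    assSet R {x : R | ∃ s ∈ S, ∃ y ∈ assSet R S, x = s + y} = assSet R S := by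
  obtain ⟨⟨h1, h0, hmul, hore⟩, hden⟩ := hS
  have hSden : IsLeftDenSet R S := ⟨⟨h1, h0, hmul, hore⟩, hden⟩
  have hsub : S ⊆ {x : R | ∃ s ∈ S, ∃ y ∈ assSet R S, x = s + y} :=
    fun s hs => ⟨s, hs, 0, ⟨1, h1, mul_zero 1⟩, (add_zero s).symm⟩
  constructor
  · refine ⟨⟨hsub h1, ?_, ?_, ?_⟩, ?_⟩
    · rintro ⟨s, hs, y, ⟨t, ht, hty⟩, h0'⟩
      have hts : t * s = 0 := by
        have h := congrArg (fun z => t * z) h0'.symm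
        simpa only [mul_zero, mul_add, hty, add_zero] using h
      exact h0 (hts ▸ hmul t ht s hs)
    · rintro x ⟨s, hs, y, hy, rfl⟩ x' ⟨t, ht, z, hz, rfl⟩
      refine ⟨s * t, hmul s hs t ht, s * z + (y * t + y * z),
        ass_add hSden (ass_mul_left hSden s hz)
          (ass_add hSden (ass_mul_right t hy) (ass_mul_right z hy)), by noncomm_ring⟩
    · rintro r x ⟨s, hs, y, hy, rfl⟩
      obtain ⟨s₁, hs₁, r₁, hore₁⟩ := hore r s hs
      obtain ⟨t, ht, hty⟩ := ass_mul_left hSden r₁ hy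
      refine ⟨t * s₁, hsub (hmul t ht s₁ hs₁), t * r₁, ?_⟩
      rw [mul_assoc, hore₁, ← mul_assoc, mul_add, mul_assoc t r₁ y, hty, add_zero]
    · rintro r x ⟨s, hs, y, hy, rfl⟩ hr0
      obtain ⟨t, ht, hty⟩ := ass_mul_left hSden r hy
      have hts : (t * r) * s = 0 := by
        have h := congrArg (fun z => t * z) hr0
        simp only [mul_zero, mul_add, ← mul_assoc, hty] at h
        simpa using h
      obtain ⟨t₂, ht₂, ht₂r⟩ := hden (t * r) s hs hts
      exact ⟨t₂ * t, hsub (hmul t₂ ht₂ t ht), by rw [mul_assoc]; exact ht₂r⟩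
  · ext r
    constructor
    · rintro ⟨u, ⟨s, hs, y, ⟨t, ht, hty⟩, rfl⟩, hur⟩
      have hsr : (t * s) * r = 0 := by
        have h := congrArg (fun z => t * z) hur
        simp only [mul_zero, add_mul, mul_add, ← mul_assoc, hty, zero_mul] at h ⊢
        simpa using h
      exact ⟨t * s, hmul t ht s hs, hsr⟩
    · rintro ⟨s, hs, hsr⟩
      exact ⟨s, hsub hs, hsr⟩

end Aux

theorem stmt8 (R : Type*) [Ring R] (S : Set R) (a : TwoSidedIdeal R)
    (hS : IsLeftDenSet R S) (haS : assSet R S = (a : Set R)) :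
    (IsLeftDenSet R {x : R | ∃ s ∈ S, ∃ y ∈ a, x = s + y} ∧
      assSet R {x : R | ∃ s ∈ S, ∃ y ∈ a, x = s + y} = (a : Set R)) ∧
    ∀ S' : Set R, IsMaxLeftDenSet R S' →
      {x : R | ∃ s ∈ S', ∃ y ∈ assSet R S', x = s + y} = S' := by
  have hset : {x : R | ∃ s ∈ S, ∃ y ∈ a, x = s + y}
      = {x : R | ∃ s ∈ S, ∃ y ∈ assSet R S, x = s + y} := by
    ext x
    constructor
    · rintro ⟨s, hs, y, hy, rfl⟩
      exact ⟨s, hs, y, haS ▸ hy, rfl⟩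
    · rintro ⟨s, hs, y, hy, rfl⟩
      exact ⟨s, hs, y, by rw [haS] at hy; exact hy, rfl⟩
  obtain ⟨hden, hass⟩ := den_plus hS
  constructor
  · rw [hset]
    exact ⟨hden, hass.trans haS⟩
  · intro S' hS'
    have h := den_plus hS'.1
    have hsub : S' ⊆ {x : R | ∃ s ∈ S', ∃ y ∈ assSet R S', x = s + y} :=
      fun s hs => ⟨s, hs, 0, ⟨1, hS'.1.1.1, mul_zero 1⟩, (add_zero s).symm⟩
    exact hS'.2 _ h.1 hsub
end

section
/- Let R be a ring. Define the set of strongly left localizable elements L^s_l(R) = ⋂_{S ∈ max.Den_l(R)} S, the largest strong left denominator set T_l(R) (the largest left denominator set contained in L^s_l(R)), and the strong left localization radical l^s_R = ass(T_l(R)). Then T_l(R) + l^s_R = T_l(R). -/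
/-!
If `S` is a left denominator set, then `ass S` is a left ideal and `S + ass S` is again a left
denominator set; by maximality, `M + ass M = M` for every maximal left denominator set `M`.
The Ore and annihilator conditions pass to unions and to generated submonoids, so `T_l(R)`,
being the submonoid generated by the union of the strong left denominator sets, is one itself.
Then `T_l(R) + ass T_l(R)` is a left denominator set lying in every maximal `M`, hence in `T_l(R)`.
-/

open Pointwise

section

variable {R : Type*} [Ring R]

def LeftOreCondition (S : Set R) : Prop :=
  ∀ r : R, ∀ s ∈ S, ∃ s' ∈ S, ∃ r' : R, s' * r = r' * s

def LeftReversible (S : Set R) : Prop :=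
  ∀ r : R, ∀ s ∈ S, r * s = 0 → ∃ t ∈ S, t * r = 0

theorem LeftOreCondition.sUnion {F : Set (Set R)} (hF : ∀ S ∈ F, LeftOreCondition S) :
    LeftOreCondition (⋃₀ F) := by
  rintro r s ⟨S, hSF, hs⟩
  obtain ⟨s', hs', r', e⟩ := hF S hSF r s hs
  exact ⟨s', ⟨S, hSF, hs'⟩, r', e⟩

theorem LeftReversible.sUnion {F : Set (Set R)} (hF : ∀ S ∈ F, LeftReversible S) :
    LeftReversible (⋃₀ F) := by
  rintro r s ⟨S, hSF, hs⟩ h0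
  obtain ⟨t, ht, e⟩ := hF S hSF r s hs h0
  exact ⟨t, ⟨S, hSF, ht⟩, e⟩

theorem LeftOreCondition.closure {S : Set R} (hS : LeftOreCondition S) :
    LeftOreCondition (Submonoid.closure S : Set R) := by
  intro r s hs
  induction hs using Submonoid.closure_induction generalizing r with
  | mem s hs =>
    obtain ⟨s', hs', r', e⟩ := hS r s hs
    exact ⟨s', Submonoid.subset_closure hs', r', e⟩
  | one => exact ⟨1, one_mem _, r, by rw [one_mul, mul_one]⟩
  | mul x y _ _ ihx ihy =>
    obtain ⟨sy, hsy, ry, ey⟩ := ihy r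
    obtain ⟨sx, hsx, rx, ex⟩ := ihx ry
    exact ⟨sx * sy, mul_mem hsx hsy, rx, by rw [mul_assoc, ey, ← mul_assoc, ex, mul_assoc]⟩

theorem LeftReversible.closure {S : Set R} (hS : LeftReversible S) :
    LeftReversible (Submonoid.closure S : Set R) := by
  intro r s hs
  induction hs using Submonoid.closure_induction generalizing r with
  | mem s hs =>
    intro h0
    obtain ⟨t, ht, e⟩ := hS r s hs h0
    exact ⟨t, Submonoid.subset_closure ht, e⟩
  | one => exact fun h0 => ⟨1, one_mem _, by rwa [one_mul, ← mul_one r]⟩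
  | mul x y _ _ ihx ihy =>
    intro h0
    obtain ⟨t, ht, et⟩ := ihy (r * x) (by rwa [mul_assoc])
    obtain ⟨t', ht', et'⟩ := ihx (t * r) (by rwa [mul_assoc])
    exact ⟨t' * t, mul_mem ht' ht, by rwa [mul_assoc]⟩

namespace IsLeftOreSet

variable {S : Set R}

theorem leftOreCondition (h : IsLeftOreSet R S) : LeftOreCondition S := h.2.2.2

theorem nontrivial (h : IsLeftOreSet R S) : Nontrivial R :=
  ⟨⟨0, 1, fun e => h.2.1 (e ▸ h.1)⟩⟩

theorem closure_subset (h : IsLeftOreSet R S) {A : Set R} (hA : A ⊆ S) :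
    (Submonoid.closure A : Set R) ⊆ S := fun _ hx => by
  induction hx using Submonoid.closure_induction with
  | mem x hx => exact hA hx
  | one => exact h.1
  | mul x y _ _ hx hy => exact h.2.2.1 x hx y hy

def assIdeal (h : IsLeftOreSet R S) : Ideal R where
  carrier := assSet R S
  zero_mem' := ⟨1, h.1, mul_zero 1⟩
  add_mem' := by
    rintro a b ⟨u, hu, hua⟩ ⟨v, hv, hvb⟩
    obtain ⟨w, hw, r', e⟩ := h.2.2.2 u v hv
    refine ⟨w * u, h.2.2.1 w hw u hu, ?_⟩
    rw [mul_add, mul_assoc, hua, e, mul_assoc, hvb, mul_zero, mul_zero, add_zero]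
  smul_mem' := by
    rintro r a ⟨u, hu, hua⟩
    obtain ⟨s', hs', r', e⟩ := h.2.2.2 r u hu
    exact ⟨s', hs', by rw [smul_eq_mul, ← mul_assoc, e, mul_assoc, hua, mul_zero]⟩

end IsLeftOreSet

theorem mul_mem_assSet_right {S : Set R} {a : R} (ha : a ∈ assSet R S) (r : R) :
    a * r ∈ assSet R S := by
  obtain ⟨u, hu, hua⟩ := ha
  exact ⟨u, hu, by rw [← mul_assoc, hua, zero_mul]⟩

theorem isLeftDenSet_one [Nontrivial R] : IsLeftDenSet R {1} := by
  refine ⟨⟨rfl, zero_ne_one, ?_, ?_⟩, ?_⟩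
  · rintro _ rfl _ rfl
    exact mul_one 1
  · rintro r _ rfl
    exact ⟨1, rfl, r, by rw [one_mul, mul_one]⟩
  · rintro r _ rfl h0
    exact ⟨1, rfl, by rwa [one_mul, ← mul_one r]⟩

namespace IsLeftDenSet

variable {S : Set R}

theorem leftReversible (h : IsLeftDenSet R S) : LeftReversible S := h.2

theorem subset_add_assSet (h : IsLeftDenSet R S) : S ⊆ S + assSet R S :=
  Set.subset_add_left S h.1.assIdeal.zero_mem

theorem add_assSet (h : IsLeftDenSet R S) : IsLeftDenSet R (S + assSet R S) := by
  refine ⟨⟨h.subset_add_assSet h.1.1, ?_, ?_, ?_⟩, ?_⟩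
  · rintro ⟨s, hs, a, ⟨u, hu, hua⟩, hsa⟩
    have hus : u * s = 0 := by rw [eq_neg_of_add_eq_zero_left hsa, mul_neg, hua, neg_zero]
    exact h.1.2.1 (hus ▸ h.1.2.2.1 u hu s hs)
  · rintro _ ⟨s, hs, a, ha, rfl⟩ _ ⟨t, ht, b, hb, rfl⟩
    refine ⟨s * t, h.1.2.2.1 s hs t ht, s * b + a * (t + b), ?_, by noncomm_ring⟩
    exact add_mem (h.1.assIdeal.mul_mem_left s hb) (mul_mem_assSet_right ha _)
  · rintro r _ ⟨s, hs, a, ha, rfl⟩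
    obtain ⟨s₁, hs₁, r₁, e₁⟩ := h.1.2.2.2 r s hs
    obtain ⟨s₂, hs₂, e₂⟩ := h.1.assIdeal.mul_mem_left r₁ ha
    refine ⟨s₂ * s₁, h.subset_add_assSet (h.1.2.2.1 s₂ hs₂ s₁ hs₁), s₂ * r₁, ?_⟩
    rw [mul_add, mul_assoc s₂ r₁ a, e₂, add_zero, mul_assoc, e₁, mul_assoc]
  · rintro r _ ⟨s, hs, a, ha, rfl⟩ h0
    -- `r s = -(r a)` lies in the left ideal `ass S`, so some `u ∈ S` gives `(u r) s = 0`.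
    have hrs : r * s ∈ assSet R S := by
      rw [eq_neg_of_add_eq_zero_left ((mul_add r s a).symm.trans h0)]
      exact neg_mem (h.1.assIdeal.mul_mem_left r ha)
    obtain ⟨u, hu, hurs⟩ := hrs
    obtain ⟨t, ht, e⟩ := h.2 (u * r) s hs (by rwa [mul_assoc])
    exact ⟨t * u, h.subset_add_assSet (h.1.2.2.1 t ht u hu), by rwa [mul_assoc]⟩

theorem exists_isMaxLeftDenSet_superset (h : IsLeftDenSet R S) :
    ∃ M, IsMaxLeftDenSet R M ∧ S ⊆ M := by
  obtain ⟨M, hSM, hM⟩ := zorn_subset_nonempty {T : Set R | IsLeftDenSet R T} (by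
    intro c hc hchain ⟨T₀, hT₀⟩
    refine ⟨⋃₀ c, ⟨⟨⟨T₀, hT₀, (hc hT₀).1.1⟩, ?_, ?_, ?_⟩, ?_⟩,
      fun _ => Set.subset_sUnion_of_mem⟩
    · rintro ⟨T, hT, h0⟩
      exact (hc hT).1.2.1 h0
    · rintro s ⟨T₁, hT₁, hs⟩ t ⟨T₂, hT₂, ht⟩
      rcases hchain.total hT₁ hT₂ with hle | hle
      · exact ⟨T₂, hT₂, (hc hT₂).1.2.2.1 s (hle hs) t ht⟩
      · exact ⟨T₁, hT₁, (hc hT₁).1.2.2.1 s hs t (hle ht)⟩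
    · exact LeftOreCondition.sUnion fun T hT => (hc hT).1.leftOreCondition
    · exact LeftReversible.sUnion fun T hT => (hc hT).leftReversible) S h
  exact ⟨M, ⟨hM.prop, fun T hT hMT => (hM.2 hT hMT).antisymm hMT⟩, hSM⟩

end IsLeftDenSet

theorem IsMaxLeftDenSet.add_assSet_eq {M : Set R} (hM : IsMaxLeftDenSet R M) :
    M + assSet R M = M :=
  hM.2 _ hM.1.add_assSet hM.1.subset_add_assSet

theorem IsLeftDenSet.subset_Tl {S : Set R} (h : IsLeftDenSet R S)
    (hS : S ⊆ stronglyLocalizable R) : S ⊆ Tl R :=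
  Set.subset_sUnion_of_mem ⟨h, hS⟩

theorem zero_notMem_stronglyLocalizable [Nontrivial R] : (0 : R) ∉ stronglyLocalizable R := by
  obtain ⟨M, hM, -⟩ := (isLeftDenSet_one (R := R)).exists_isMaxLeftDenSet_superset
  exact fun h => hM.1.1.2.1 (h M hM)

theorem Tl_subset_stronglyLocalizable : Tl R ⊆ stronglyLocalizable R := by
  rintro x ⟨S, ⟨-, hSL⟩, hx⟩
  exact hSL hx

theorem isLeftDenSet_Tl [Nontrivial R] : IsLeftDenSet R (Tl R) := by
  set C := (Submonoid.closure (Tl R) : Set R)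
  have hCL : C ⊆ stronglyLocalizable R := fun x hx M hM =>
    hM.1.1.closure_subset (fun _ hy => Tl_subset_stronglyLocalizable hy M hM) hx
  have hC : IsLeftDenSet R C :=
    ⟨⟨one_mem _, fun h => zero_notMem_stronglyLocalizable (hCL h), fun _ hs _ ht => mul_mem hs ht,
      (LeftOreCondition.sUnion fun _ hS => hS.1.1.leftOreCondition).closure⟩,
      (LeftReversible.sUnion fun _ hS => hS.1.leftReversible).closure⟩
  rwa [Submonoid.subset_closure.antisymm (hC.subset_Tl hCL)]

theorem add_assSet_subset_stronglyLocalizable {S : Set R}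
    (hS : S ⊆ stronglyLocalizable R) : S + assSet R S ⊆ stronglyLocalizable R := by
  rintro _ ⟨s, hs, a, ⟨u, hu, hua⟩, rfl⟩ M hM
  rw [← hM.add_assSet_eq]
  exact Set.add_mem_add (hS hs M hM) ⟨u, hS hu M hM, hua⟩

end

theorem stmt9 (R : Type*) [Ring R] :
    {x : R | ∃ t ∈ Tl R, ∃ y ∈ assSet R (Tl R), x = t + y} = Tl R := by
  ext x
  constructor
  · rintro ⟨t, ht, y, hy, rfl⟩
    have : Nontrivial R := by
      obtain ⟨S, ⟨hS, -⟩, -⟩ := ht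
      exact hS.1.nontrivial
    have hT : IsLeftDenSet R (Tl R) := isLeftDenSet_Tl
    exact hT.add_assSet.subset_Tl
      (add_assSet_subset_stronglyLocalizable Tl_subset_stronglyLocalizable)
      (Set.add_mem_add ht hy)
  · intro hx
    exact ⟨x, hx, 0, ⟨x, hx, mul_zero x⟩, (add_zero x).symm⟩
end

section
/- Let R be a ring, L^s_l(R) = ⋂_{S ∈ max.Den_l(R)} S, and l_R = ⋂_{S ∈ max.Den_l(R)} ass(S) the left localization radical. Then L^s_l(R) + l_R ⊆ L^s_l(R). -/
/-- ass(S) is closed under left multiplication (uses the Ore condition). -/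
lemma assSet_smul {R : Type*} [Ring R] {S : Set R} (h : IsLeftDenSet R S)
    (r : R) {y : R} (hy : y ∈ assSet R S) : r * y ∈ assSet R S := by
  obtain ⟨s, hs, hsy⟩ := hy
  obtain ⟨s', hs', r', hrel⟩ := h.1.2.2.2 r s hs
  exact ⟨s', hs', by rw [← mul_assoc, hrel, mul_assoc, hsy, mul_zero]⟩

/-- For a maximal left denominator set `S`, `S + ass(S) ⊆ S`. -/
lemma max_add_ass {R : Type*} [Ring R] {S : Set R} (hS : IsMaxLeftDenSet R S)
    {s y : R} (hs : s ∈ S) (hy : y ∈ assSet R S) : s + y ∈ S := by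
  obtain ⟨⟨⟨h1, h0, hmul, hore⟩, hden⟩, hmax⟩ := hS
  have hDen : IsLeftDenSet R S := ⟨⟨h1, h0, hmul, hore⟩, hden⟩
  set T : Set R := {x : R | ∃ u ∈ S, ∃ a ∈ assSet R S, x = u + a} with hT
  -- ass closed under right mult
  have assr : ∀ (a : R), a ∈ assSet R S → ∀ r : R, a * r ∈ assSet R S := by
    rintro a ⟨u, hu, hua⟩ r
    exact ⟨u, hu, by rw [← mul_assoc, hua, zero_mul]⟩
  have hST : S ⊆ T := fun u hu => ⟨u, hu, 0, ⟨1, h1, mul_zero 1⟩, (add_zero u).symm⟩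
  have hTden : IsLeftDenSet R T := by
    refine ⟨⟨hST h1, ?_, ?_, ?_⟩, ?_⟩
    · -- 0 ∉ T
      rintro ⟨u, hu, a, ⟨v, hv, hva⟩, hsum⟩
      have : v * u = 0 := by
        have := congrArg (v * ·) hsum.symm
        simp only [mul_add, hva, add_zero, mul_zero] at this
        exact this
      exact h0 (this ▸ hmul v hv u hu)
    · -- mult closed
      rintro _ ⟨u1, hu1, a1, ha1, rfl⟩ _ ⟨u2, hu2, a2, ha2, rfl⟩
      refine ⟨u1 * u2, hmul u1 hu1 u2 hu2, u1 * a2 + (a1 * u2 + a1 * a2), ?_, by noncomm_ring⟩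
      -- closure of ass under addition
      have addass : ∀ b c : R, b ∈ assSet R S → c ∈ assSet R S → b + c ∈ assSet R S := by
        rintro b c ⟨v1, hv1, hvb⟩ ⟨v2, hv2, hvc⟩
        obtain ⟨w, hw, r', hwr⟩ := hore v1 v2 hv2
        refine ⟨w * v1, hmul w hw v1 hv1, ?_⟩
        rw [mul_add, mul_assoc, hvb, mul_zero, hwr, mul_assoc, hvc, mul_zero, add_zero]
      exact addass _ _ (assSet_smul hDen u1 ha2)
        (addass _ _ (assr a1 ha1 u2) (assr a1 ha1 a2))
    · -- Ore for T
      rintro r _ ⟨u, hu, a, ⟨v, hv, hva⟩, rfl⟩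
      obtain ⟨w, hw, r', hwr⟩ := hore r (v * u) (hmul v hv u hu)
      refine ⟨w, hST hw, r' * v, ?_⟩
      rw [hwr, mul_assoc, mul_add, hva, add_zero]
    · -- denominator condition for T
      rintro r _ ⟨u, hu, a, ha, rfl⟩ hr0
      have heq : r * u = -(r * a) := by
        have h := hr0; rw [mul_add] at h
        exact eq_neg_of_add_eq_zero_left h
      obtain ⟨v1, hv1, hv1ra⟩ := assSet_smul hDen r ha
      have hru : v1 * (r * u) = 0 := by
        rw [heq, mul_neg, hv1ra, neg_zero]
      obtain ⟨w, hw, hwvr⟩ := hden (v1 * r) u hu (by rw [mul_assoc]; exact hru)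
      exact ⟨w * v1, hST (hmul w hw v1 hv1), by rw [mul_assoc]; exact hwvr⟩
  have := hmax T hTden hST
  exact this ▸ (⟨s, hs, y, hy, rfl⟩ : s + y ∈ T)

theorem stmt10 (R : Type*) [Ring R] :
    {x : R | ∃ t ∈ stronglyLocalizable R, ∃ y ∈ lRad R, x = t + y} ⊆
      stronglyLocalizable R := by
  rintro x ⟨t, ht, y, hy, rfl⟩ S hS
  exact max_add_ass hS (ht S hS) (hy S hS)
end

section
/- Let R be a ring, S ∈ Den_l(R, a) and T ∈ Den_l(R, b) left denominator sets with ass(S) = a ⊆ b = ass(T). Then the submonoid ST generated by S and T is a left denominator set of R whose associated ideal ass(ST) contains b, and moreover the right-annihilator set r.ass(ST) := {r ∈ R | rc = 0 for some c ∈ ST} is contained in b. -/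
theorem stmt18 (R : Type*) [Ring R] (a b : TwoSidedIdeal R) (S T : Set R)
    (hS : IsLeftDenSet R S) (hT : IsLeftDenSet R T)
    (haS : assSet R S = (a : Set R)) (hbT : assSet R T = (b : Set R))
    (hab : a ≤ b) :
    IsLeftDenSet R (Submonoid.closure (S ∪ T) : Set R) ∧
      (b : Set R) ⊆ assSet R (Submonoid.closure (S ∪ T) : Set R) ∧
      {r : R | ∃ c ∈ (Submonoid.closure (S ∪ T) : Set R), r * c = 0} ⊆
        (b : Set R) := by
  obtain ⟨⟨hS1, hS0, hSmul, hSore⟩, hSden⟩ := hS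
  obtain ⟨⟨hT1, hT0, hTmul, hTore⟩, hTden⟩ := hT
  -- Key lemma: for c in the closure, r * c ∈ b implies r ∈ b
  have hP : ∀ c ∈ Submonoid.closure (S ∪ T), ∀ r : R, r * c ∈ b → r ∈ b := by
    intro c hc
    induction hc using Submonoid.closure_induction with
    | mem x hx =>
      intro r hr
      rcases hx with hx | hx
      · have h1 : r * x ∈ assSet R T := by
          rw [hbT]; exact hr
        obtain ⟨t, htT, ht0⟩ := h1
        have h2 : (t * r) * x = 0 := by rw [mul_assoc]; exact ht0
        obtain ⟨s', hs'S, hs'0⟩ := hSden _ _ hx h2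
        have h3 : t * r ∈ assSet R S := ⟨s', hs'S, hs'0⟩
        have h4 : t * r ∈ b := hab (by rwa [haS] at h3)
        have h5 : t * r ∈ assSet R T := by rw [hbT]; exact h4
        obtain ⟨t', ht'T, ht'0⟩ := h5
        have h6 : (t' * t) * r = 0 := by rw [mul_assoc]; exact ht'0
        have h7 : r ∈ assSet R T := ⟨t' * t, hTmul _ ht'T _ htT, h6⟩
        rwa [hbT] at h7
      · have h1 : r * x ∈ assSet R T := by
          rw [hbT]; exact hr
        obtain ⟨t, htT, ht0⟩ := h1
        have h2 : (t * r) * x = 0 := by rw [mul_assoc]; exact ht0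
        obtain ⟨t', ht'T, ht'0⟩ := hTden _ _ hx h2
        have h3 : (t' * t) * r = 0 := by rw [mul_assoc]; exact ht'0
        have h4 : r ∈ assSet R T := ⟨t' * t, hTmul _ ht'T _ htT, h3⟩
        rwa [hbT] at h4
    | one =>
      intro r hr
      rwa [mul_one] at hr
    | mul x y hx hy ihx ihy =>
      intro r hr
      have : (r * x) * y ∈ b := by rwa [mul_assoc]
      exact ihx r (ihy (r * x) this)
  -- 0 is not in the closure
  have h0 : (0 : R) ∉ (Submonoid.closure (S ∪ T) : Set R) := by
    intro h
    have h1 : (1 : R) ∈ b := hP 0 h 1 (by simp [b.zero_mem])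
    have h2 : (1 : R) ∈ assSet R T := by rw [hbT]; exact h1
    obtain ⟨t, htT, ht0⟩ := h2
    rw [mul_one] at ht0
    exact hT0 (ht0 ▸ htT)
  -- Ore condition for the closure
  have hOre : ∀ c ∈ Submonoid.closure (S ∪ T), ∀ r : R,
      ∃ c' ∈ (Submonoid.closure (S ∪ T) : Set R), ∃ r' : R, c' * r = r' * c := by
    intro c hc
    induction hc using Submonoid.closure_induction with
    | mem x hx =>
      intro r
      rcases hx with hx | hx
      · obtain ⟨s', hs', r', h⟩ := hSore r x hx
        exact ⟨s', Submonoid.subset_closure (Or.inl hs'), r', h⟩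
      · obtain ⟨t', ht', r', h⟩ := hTore r x hx
        exact ⟨t', Submonoid.subset_closure (Or.inr ht'), r', h⟩
    | one =>
      intro r
      exact ⟨1, Submonoid.one_mem _, r, by rw [one_mul, mul_one]⟩
    | mul x y hx hy ihx ihy =>
      intro r
      obtain ⟨y', hy', r1, hy1⟩ := ihy r
      obtain ⟨x', hx', r2, hx2⟩ := ihx r1
      refine ⟨x' * y', Submonoid.mul_mem _ hx' hy', r2, ?_⟩
      rw [mul_assoc, hy1, ← mul_assoc, hx2, mul_assoc]
  -- Denominator condition for the closure
  have hDen : ∀ c ∈ Submonoid.closure (S ∪ T), ∀ r : R, r * c = 0 →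
      ∃ d ∈ (Submonoid.closure (S ∪ T) : Set R), d * r = 0 := by
    intro c hc
    induction hc using Submonoid.closure_induction with
    | mem x hx =>
      intro r hr
      rcases hx with hx | hx
      · obtain ⟨t, ht, h⟩ := hSden r x hx hr
        exact ⟨t, Submonoid.subset_closure (Or.inl ht), h⟩
      · obtain ⟨t, ht, h⟩ := hTden r x hx hr
        exact ⟨t, Submonoid.subset_closure (Or.inr ht), h⟩
    | one =>
      intro r hr
      rw [mul_one] at hr
      exact ⟨1, Submonoid.one_mem _, by rw [hr, mul_zero]⟩
    | mul x y hx hy ihx ihy =>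
      intro r hr
      have h1 : (r * x) * y = 0 := by rwa [mul_assoc]
      obtain ⟨d, hd, hd0⟩ := ihy (r * x) h1
      have h2 : (d * r) * x = 0 := by rw [mul_assoc]; exact hd0
      obtain ⟨d', hd', hd'0⟩ := ihx (d * r) h2
      exact ⟨d' * d, Submonoid.mul_mem _ hd' hd, by rw [mul_assoc]; exact hd'0⟩
  refine ⟨⟨⟨Submonoid.one_mem _, h0, fun s hs t ht => Submonoid.mul_mem _ hs ht,
      fun r s hs => hOre s hs r⟩, fun r s hs h => hDen s hs r h⟩, ?_, ?_⟩
  · intro r hr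
    have h1 : r ∈ assSet R T := by rw [hbT]; exact hr
    obtain ⟨t, htT, ht0⟩ := h1
    exact ⟨t, Submonoid.subset_closure (Or.inr htT), ht0⟩
  · rintro r ⟨c, hc, hrc⟩
    exact hP c hc r (by rw [hrc]; exact b.zero_mem)
end
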